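/- Consider the zero-field Ising model on a finite connected simple graph G = (V,E) with couplings J(e) ≥ J_min > 0 at inverse temperature β > 0. For every border B of G, the Gibbs probability that every edge of B is a disagreement edge satisfies P_β( B ⊆ D(σ) ) ≤ e^{−2 β J_min |B|}. -/

import Mathlib

open scoped BigOperators Classical

namespace PG

variable {V : Type*}

/-- The product of the spins at the two endpoints of an unordered pair. -/
def spinProd (σ : V → ℤ) : Sym2 V → ℤ :=
  Sym2.lift ⟨fun i j => σ i * σ j, fun i j => mul_comm (σ i) (σ j)⟩

/-- The spins at the two endpoints of an unordered pair disagree. -/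
def Disagrees (σ : V → ℤ) : Sym2 V → Prop :=
  Sym2.lift ⟨fun i j => σ i ≠ σ j, fun i j => propext ne_comm⟩

/-- The disagreement edge set D(σ) of a spin configuration. -/
def disagreeSet (G : SimpleGraph V) (σ : V → ℤ) : Set (Sym2 V) :=
  {e | e ∈ G.edgeSet ∧ Disagrees σ e}

/-- A spin configuration takes values ±1. -/
def IsSpin (σ : V → ℤ) : Prop := ∀ v, σ v = 1 ∨ σ v = -1

/-- `B` is a border of `G` with sides `P₁`, `P₂`. -/
structure IsBorderWith (G : SimpleGraph V) (B : Set (Sym2 V)) (P₁ P₂ : Set V) : Prop where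
  disj : Disjoint P₁ P₂
  cover : P₁ ∪ P₂ = Set.univ
  ne₁ : P₁.Nonempty
  ne₂ : P₂.Nonempty
  conn₁ : (G.induce P₁).Connected
  conn₂ : (G.induce P₂).Connected
  eq_edges : B = {e | e ∈ G.edgeSet ∧ ∃ i ∈ P₁, ∃ j ∈ P₂, e = s(i, j)}

/-- `B` is a border of `G`. -/
def IsBorder (G : SimpleGraph V) (B : Set (Sym2 V)) : Prop :=
  ∃ P₁ P₂ : Set V, IsBorderWith G B P₁ P₂

/-- `p` is internal to the border `B`: it lies on the side with no more vertices. -/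
def InternalTo (G : SimpleGraph V) (p : V) (B : Set (Sym2 V)) : Prop :=
  ∃ P₁ P₂ : Set V, IsBorderWith G B P₁ P₂ ∧ p ∈ P₁ ∧ P₁.ncard ≤ P₂.ncard

/-- μ^p(b): the number of borders of cardinality `b` to which `p` is internal. -/
noncomputable def mu (G : SimpleGraph V) (p : V) (b : ℕ) : ℕ :=
  {B : Finset (Sym2 V) | B.card = b ∧ InternalTo G p ↑B}.ncard

/-- The vertex border of `B` on side `P`: endpoints of edges of `B` lying in `P`. -/
def vertexBorder (B : Set (Sym2 V)) (P : Set V) : Set V :=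
  {v | v ∈ P ∧ ∃ e ∈ B, v ∈ e}

/-- Encoding of spin configurations by boolean functions. -/
def toSpin (τ : V → Bool) : V → ℤ := fun v => if τ v then 1 else -1

/-- The zero-field Ising Hamiltonian. -/
noncomputable def hamiltonian [Fintype V] (G : SimpleGraph V) [Fintype G.edgeSet]
    (J : Sym2 V → ℝ) (σ : V → ℤ) : ℝ :=
  -∑ e ∈ G.edgeFinset, J e * (spinProd σ e : ℝ)

/-- The partition function Z at inverse temperature β. -/
noncomputable def partitionZ [Fintype V] [DecidableEq V] (G : SimpleGraph V)
    [Fintype G.edgeSet] (J : Sym2 V → ℝ) (β : ℝ) : ℝ :=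
  ∑ τ : V → Bool, Real.exp (-β * hamiltonian G J (toSpin τ))

/-- Gibbs expectation of an observable `f` at inverse temperature β. -/
noncomputable def gibbsExp [Fintype V] [DecidableEq V] (G : SimpleGraph V)
    [Fintype G.edgeSet] (J : Sym2 V → ℝ) (β : ℝ) (f : (V → ℤ) → ℝ) : ℝ :=
  (∑ τ : V → Bool, f (toSpin τ) * Real.exp (-β * hamiltonian G J (toSpin τ))) /
    partitionZ G J β

/-- Gibbs probability of an event `S` at inverse temperature β. -/
noncomputable def gibbsProb [Fintype V] [DecidableEq V] (G : SimpleGraph V)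
    [Fintype G.edgeSet] (J : Sym2 V → ℝ) (β : ℝ) (S : (V → ℤ) → Prop) : ℝ :=
  gibbsExp G J β (fun σ => if S σ then 1 else 0)

/-- The magnetization M(σ). -/
noncomputable def magn [Fintype V] (σ : V → ℤ) : ℝ :=
  (∑ i, (σ i : ℝ)) / (Fintype.card V : ℝ)

/-- The external vertex boundary of a set of vertices. -/
def extBoundary (G : SimpleGraph V) (A : Set V) : Set V :=
  {v | v ∉ A ∧ ∃ a ∈ A, G.Adj v a}

/-- A (C,d)-isoperimetric inequality. -/
def IsoIneq (G : SimpleGraph V) (C d : ℝ) : Prop :=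
  ∀ A : Set V, A.Finite → A.Nonempty → A ≠ Set.univ →
    (extBoundary G A).Infinite ∨
      C * (A.ncard : ℝ) ^ ((d - 1) / d) ≤ ((extBoundary G A).ncard : ℝ)

/-- `G` has growth exponent `df`: balls of radius `r ≥ 1` contain at most `r^df` vertices. -/
def HasGrowth (G : SimpleGraph V) (df : ℝ) : Prop :=
  ∀ p : V, ∀ r : ℕ, 1 ≤ r → (({q : V | G.dist p q ≤ r}).ncard : ℝ) ≤ (r : ℝ) ^ df

/-- ν_q(b): the number of vertex sets containing `q` arising as a vertex border of a
border of cardinality `b`. -/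
noncomputable def nu (G : SimpleGraph V) (q : V) (b : ℕ) : ℕ :=
  {S : Set V | q ∈ S ∧ ∃ (B : Finset (Sym2 V)) (P₁ P₂ : Set V),
    IsBorderWith G ↑B P₁ P₂ ∧ B.card = b ∧ S = vertexBorder ↑B P₂}.ncard

/-! Peierls argument: flipping every spin on the side `P₁` of the border reverses the sign of
`σ i * σ j` exactly on the edges of `B`. When all these edges disagree, the flip therefore lowers
the energy by `2 ∑_{e ∈ B} J e ≥ 2 Jmin |B|`, so the Boltzmann weight of `σ` is at most
`exp (-2 β Jmin |B|)` times that of its flip; since flipping is a bijection of configurations,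
summing gives the bound with the partition function in the denominator. -/

lemma spinProd_eq_neg_one (τ : V → Bool) (e : Sym2 V)
    (h : Disagrees (toSpin τ) e) : spinProd (toSpin τ) e = -1 := by
  induction e using Sym2.ind with
  | _ i j =>
    have h' : toSpin τ i ≠ toSpin τ j := h
    cases hi : τ i <;> cases hj : τ j <;>
      simp [toSpin, hi, hj, spinProd] at h' ⊢

noncomputable def flipOn (S : Set V) : Equiv.Perm (V → Bool) :=
  Function.Involutive.toPerm (fun τ v => if v ∈ S then !τ v else τ v) fun τ => by
    funext v
    by_cases hv : v ∈ S <;> simp [hv]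

lemma flipOn_apply (S : Set V) (τ : V → Bool) (v : V) :
    flipOn S τ v = if v ∈ S then !τ v else τ v :=
  rfl

lemma toSpin_flipOn (S : Set V) (τ : V → Bool) (v : V) :
    toSpin (flipOn S τ) v = (if v ∈ S then -1 else 1) * toSpin τ v := by
  by_cases hv : v ∈ S <;> cases hτ : τ v <;>
    simp [flipOn_apply, toSpin, hv, hτ]

lemma spinProd_flipOn (S : Set V) (τ : V → Bool) (i j : V) :
    spinProd (toSpin (flipOn S τ)) s(i, j) =
      (if (i ∈ S ↔ j ∈ S) then 1 else -1) * spinProd (toSpin τ) s(i, j) := by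
  simp only [spinProd, Sym2.lift_mk, toSpin_flipOn]
  by_cases hi : i ∈ S <;> by_cases hj : j ∈ S <;> simp [hi, hj]

namespace IsBorderWith

variable {G : SimpleGraph V} {B : Set (Sym2 V)} {P₁ P₂ : Set V}

lemma compl_eq (h : IsBorderWith G B P₁ P₂) : P₁ᶜ = P₂ :=
  IsCompl.compl_eq ⟨h.disj, codisjoint_iff.mpr h.cover⟩

lemma subset_edgeSet (h : IsBorderWith G B P₁ P₂) : B ⊆ G.edgeSet := by
  rw [h.eq_edges]
  exact fun _ he => he.1

lemma mk_mem_iff (h : IsBorderWith G B P₁ P₂) {i j : V} (hij : G.Adj i j) :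
    s(i, j) ∈ B ↔ ¬(i ∈ P₁ ↔ j ∈ P₁) := by
  rw [h.eq_edges, ← h.compl_eq]
  simp only [Set.mem_ofPred_eq, SimpleGraph.mem_edgeSet, hij, true_and, Set.mem_compl_iff,
    Sym2.eq_iff]
  constructor
  · rintro ⟨a, ha, b, hb, ⟨rfl, rfl⟩ | ⟨rfl, rfl⟩⟩ <;> tauto
  · intro hne
    by_cases hi : i ∈ P₁
    · exact ⟨i, hi, j, by tauto, Or.inl ⟨rfl, rfl⟩⟩
    · exact ⟨j, by tauto, i, hi, Or.inr ⟨rfl, rfl⟩⟩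

lemma spinProd_flipOn (h : IsBorderWith G B P₁ P₂) (τ : V → Bool) {e : Sym2 V}
    (he : e ∈ G.edgeSet) :
    spinProd (toSpin (flipOn P₁ τ)) e = (if e ∈ B then -1 else 1) * spinProd (toSpin τ) e := by
  induction e using Sym2.ind with
  | _ i j =>
    rw [PG.spinProd_flipOn, h.mk_mem_iff he]
    by_cases hij : (i ∈ P₁ ↔ j ∈ P₁) <;> simp [hij]

end IsBorderWith

lemma hamiltonian_eq_add_of_spinProd [Fintype V] (G : SimpleGraph V) [Fintype G.edgeSet]
    (J : Sym2 V → ℝ) {σ σ' : V → ℤ} {B : Finset (Sym2 V)} (hB : B ⊆ G.edgeFinset)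
    (hσ : ∀ e ∈ G.edgeFinset, spinProd σ' e = (if e ∈ B then -1 else 1) * spinProd σ e) :
    hamiltonian G J σ' = hamiltonian G J σ + 2 * ∑ e ∈ B, J e * (spinProd σ e : ℝ) := by
  have hterm : ∀ e ∈ G.edgeFinset, J e * (spinProd σ' e : ℝ) =
      J e * (spinProd σ e : ℝ) - if e ∈ B then 2 * (J e * (spinProd σ e : ℝ)) else 0 := by
    intro e he
    rw [hσ e he]
    split_ifs <;> push_cast <;> ring
  rw [hamiltonian, hamiltonian, Finset.sum_congr rfl hterm, Finset.sum_sub_distrib,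
    Finset.sum_ite_mem, Finset.inter_eq_right.mpr hB, Finset.mul_sum]
  ring

lemma partitionZ_pos [Fintype V] [DecidableEq V] (G : SimpleGraph V) [Fintype G.edgeSet]
    (J : Sym2 V → ℝ) (β : ℝ) : 0 < partitionZ G J β :=
  Finset.sum_pos (fun _ _ => Real.exp_pos _) Finset.univ_nonempty

lemma gibbsProb_le_of_weight_le_perm [Fintype V] [DecidableEq V] (G : SimpleGraph V)
    [Fintype G.edgeSet] (J : Sym2 V → ℝ) (β : ℝ) (S : (V → ℤ) → Prop)
    (φ : Equiv.Perm (V → Bool)) {c : ℝ} (hc : 0 ≤ c)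
    (hφ : ∀ τ, S (toSpin τ) → Real.exp (-β * hamiltonian G J (toSpin τ)) ≤
      c * Real.exp (-β * hamiltonian G J (toSpin (φ τ)))) :
    gibbsProb G J β S ≤ c := by
  rw [gibbsProb, gibbsExp, div_le_iff₀ (partitionZ_pos G J β)]
  calc ∑ τ, (if S (toSpin τ) then (1 : ℝ) else 0) * Real.exp (-β * hamiltonian G J (toSpin τ))
      ≤ ∑ τ, c * Real.exp (-β * hamiltonian G J (toSpin (φ τ))) := by
        refine Finset.sum_le_sum fun τ _ => ?_
        split_ifs with hS
        · rw [one_mul]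
          exact hφ τ hS
        · rw [zero_mul]
          positivity
    _ = c * partitionZ G J β := by
        rw [← Finset.mul_sum, partitionZ, Equiv.sum_comp φ fun τ =>
          Real.exp (-β * hamiltonian G J (toSpin τ))]

lemma sum_mul_spinProd_of_subset_disagreeSet {G : SimpleGraph V} (J : Sym2 V → ℝ)
    {B : Finset (Sym2 V)} {τ : V → Bool} (hτ : ↑B ⊆ disagreeSet G (toSpin τ)) :
    ∑ e ∈ B, J e * (spinProd (toSpin τ) e : ℝ) = -∑ e ∈ B, J e := by
  rw [← Finset.sum_neg_distrib]
  refine Finset.sum_congr rfl fun e he => ?_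
  rw [spinProd_eq_neg_one τ e (hτ he).2]
  push_cast
  ring

theorem stmt_5_general {V : Type*} [Fintype V] [DecidableEq V] (G : SimpleGraph V)
    [DecidableRel G.Adj]
    (J : Sym2 V → ℝ) (Jmin : ℝ)
    (hJ : ∀ e ∈ G.edgeFinset, Jmin ≤ J e) (β : ℝ) (hβ : 0 < β)
    (B : Finset (Sym2 V)) (hB : IsBorder G ↑B) :
    gibbsProb G J β (fun σ => ↑B ⊆ disagreeSet G σ) ≤
      Real.exp (-2 * β * Jmin * (B.card : ℝ)) := by
  obtain ⟨P₁, P₂, hBW⟩ := hB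
  have hBG : B ⊆ G.edgeFinset := fun e he => G.mem_edgeFinset.mpr (hBW.subset_edgeSet he)
  refine gibbsProb_le_of_weight_le_perm G J β _ (flipOn P₁) (Real.exp_nonneg _) fun τ hτ => ?_
  have hflip := hamiltonian_eq_add_of_spinProd G J (σ' := toSpin (flipOn P₁ τ)) hBG
    fun e he => by simpa using hBW.spinProd_flipOn τ (G.mem_edgeFinset.mp he)
  have hJB : (B.card : ℝ) * Jmin ≤ ∑ e ∈ B, J e := by
    simpa using Finset.card_nsmul_le_sum B J Jmin fun e he => hJ e (hBG he)
  rw [← Real.exp_add, Real.exp_le_exp, hflip, sum_mul_spinProd_of_subset_disagreeSet J hτ]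
  linarith [mul_le_mul_of_nonneg_left hJB hβ.le]

/-- Peierls estimate — the Gibbs probability that all edges of a border
are disagreement edges is at most `exp (−2 β Jmin |B|)`. -/
theorem stmt_5 {V : Type*} [Fintype V] [DecidableEq V] (G : SimpleGraph V)
    [DecidableRel G.Adj] (hG : G.Connected)
    (J : Sym2 V → ℝ) (Jmin : ℝ) (hJmin : 0 < Jmin)
    (hJ : ∀ e ∈ G.edgeFinset, Jmin ≤ J e) (β : ℝ) (hβ : 0 < β)
    (B : Finset (Sym2 V)) (hB : IsBorder G ↑B) :
    gibbsProb G J β (fun σ => ↑B ⊆ disagreeSet G σ) ≤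
      Real.exp (-2 * β * Jmin * (B.card : ℝ)) :=
  stmt_5_general G J Jmin hJ β hβ B hB

end PG
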